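/- arXiv:2004.04493 — 4 statements merged into one kernel-verified Lean document; each statement's English description precedes it below -/
import Mathlib

section
/- For a random variable d with mean μ > 0 and variance σ², if d̃ ≤ (μ² + σ²)/(2μ), then the two-point distribution placing mass σ²/(σ²+μ²) at 0 and mass μ²/(σ²+μ²) at (σ²+μ²)/μ has mean μ and variance σ², and under this distribution E[(d - d̃)₊] = μ - d̃·μ²/(μ²+σ²). -/
open MeasureTheory Real

theorem stmt_0 (μ σ dt : ℝ) (hμ : 0 < μ) (hσ : 0 < σ) (hdt : 0 ≤ dt)
    (hle : dt ≤ (μ ^ 2 + σ ^ 2) / (2 * μ))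
    (P : Measure ℝ)
    (hP : P = (ENNReal.ofReal (σ ^ 2 / (σ ^ 2 + μ ^ 2))) • Measure.dirac 0
        + (ENNReal.ofReal (μ ^ 2 / (σ ^ 2 + μ ^ 2))) • Measure.dirac ((σ ^ 2 + μ ^ 2) / μ)) :
    IsProbabilityMeasure P ∧
    (∫ x, x ∂P) = μ ∧
    (∫ x, (x - μ) ^ 2 ∂P) = σ ^ 2 ∧
    (∫ x, max (x - dt) 0 ∂P) = μ - dt * μ ^ 2 / (μ ^ 2 + σ ^ 2) := by
  have hs : (0:ℝ) < σ ^ 2 + μ ^ 2 := by positivity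
  have ha : (0:ℝ) ≤ σ ^ 2 / (σ ^ 2 + μ ^ 2) := by positivity
  have hb : (0:ℝ) ≤ μ ^ 2 / (σ ^ 2 + μ ^ 2) := by positivity
  have key : ∀ f : ℝ → ℝ, ∫ x, f x ∂P =
      (σ ^ 2 / (σ ^ 2 + μ ^ 2)) * f 0
        + (μ ^ 2 / (σ ^ 2 + μ ^ 2)) * f ((σ ^ 2 + μ ^ 2) / μ) := by
    intro f
    rw [hP, integral_add_measure
        (((integrable_const (f 0)).congr (ae_eq_dirac f).symm).smul_measure
          ENNReal.ofReal_ne_top)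
        (((integrable_const (f ((σ ^ 2 + μ ^ 2) / μ))).congr
          (ae_eq_dirac f).symm).smul_measure ENNReal.ofReal_ne_top),
      integral_smul_measure, integral_smul_measure, integral_dirac, integral_dirac,
      ENNReal.toReal_ofReal ha, ENNReal.toReal_ofReal hb]
    simp [smul_eq_mul]
  refine ⟨?_, ?_, ?_, ?_⟩
  · constructor
    rw [hP]
    simp only [Measure.coe_add, Pi.add_apply, Measure.smul_apply, smul_eq_mul,
      Measure.dirac_apply_of_mem (Set.mem_univ _), mul_one]
    rw [← ENNReal.ofReal_add ha hb, ← ENNReal.ofReal_one]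
    congr 1
    field_simp
  · rw [key]
    field_simp
    ring
  · rw [key]
    field_simp
    ring
  · rw [key]
    have h1 : max ((0:ℝ) - dt) 0 = 0 := max_eq_right (by linarith)
    have h2 : max ((σ ^ 2 + μ ^ 2) / μ - dt) 0 = (σ ^ 2 + μ ^ 2) / μ - dt := by
      apply max_eq_left
      have : dt ≤ (σ ^ 2 + μ ^ 2) / μ := by
        refine hle.trans ?_
        rw [div_le_div_iff₀ (by positivity) hμ]
        nlinarith
      linarith
    rw [h1, h2]
    field_simp
    ring
end

section
/- For any probability distribution P on ℝ with mean μ and variance σ², and any threshold d̃, the expected excess satisfies E_P[(d - d̃)₊] ≤ (1/2)(μ - d̃ + √((d̃ - μ)² + σ²)). -/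
open MeasureTheory Real

theorem stmt_1 (μ σ dt : ℝ) (hσ : 0 < σ)
    (P : Measure ℝ) [IsProbabilityMeasure P]
    (hint : Integrable (fun x => x) P)
    (hint2 : Integrable (fun x => (x - μ) ^ 2) P)
    (hmean : (∫ x, x ∂P) = μ)
    (hvar : (∫ x, (x - μ) ^ 2 ∂P) = σ ^ 2) :
    (∫ x, max (x - dt) 0 ∂P) ≤ (1 / 2) * (μ - dt + Real.sqrt ((dt - μ) ^ 2 + σ ^ 2)) := by
  have hg : Integrable (fun x => x - dt) P := hint.sub (integrable_const dt)
  have hga : Integrable (fun x => |x - dt|) P := hg.abs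
  have hxm : Integrable (fun x => x - μ) P := hint.sub (integrable_const μ)
  have hg2 : Integrable (fun x => (x - dt) ^ 2) P := by
    have : (fun x => (x - dt) ^ 2) =
        fun x => (x - μ) ^ 2 + (2 * (μ - dt)) * (x - μ) + (μ - dt) ^ 2 := by
      funext x; ring
    rw [this]
    exact (hint2.add (hxm.const_mul _)).add (integrable_const _)
  have hxm0 : (∫ x, (x - μ) ∂P) = 0 := by
    rw [integral_sub hint (integrable_const μ), hmean, integral_const]
    simp
  have I2 : (∫ x, (x - dt) ^ 2 ∂P) = (dt - μ) ^ 2 + σ ^ 2 := by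
    have h : (fun x => (x - dt) ^ 2) =
        fun x => (x - μ) ^ 2 + (2 * (μ - dt)) * (x - μ) + (μ - dt) ^ 2 := by
      funext x; ring
    have hA : Integrable (fun x => (x - μ) ^ 2 + (2 * (μ - dt)) * (x - μ)) P :=
      hint2.add (hxm.const_mul _)
    have hB : Integrable (fun x => (2 * (μ - dt)) * (x - μ)) P := hxm.const_mul _
    rw [h, integral_add hA (integrable_const _),
      integral_add hint2 hB, integral_const_mul, hxm0, hvar,
      integral_const]
    simp; ring
  set m := ∫ x, |x - dt| ∂P with hm
  have hm0 : 0 ≤ m := integral_nonneg fun x => abs_nonneg _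
  have hcs : m ^ 2 ≤ (dt - μ) ^ 2 + σ ^ 2 := by
    have hnn : 0 ≤ ∫ x, (|x - dt| - m) ^ 2 ∂P := integral_nonneg fun x => sq_nonneg _
    have hexp : (∫ x, (|x - dt| - m) ^ 2 ∂P)
        = (∫ x, (x - dt) ^ 2 ∂P) - 2 * m * m + m ^ 2 := by
      have h : (fun x => (|x - dt| - m) ^ 2) =
          fun x => (x - dt) ^ 2 + ((-(2 * m)) * |x - dt| + m ^ 2) := by
        funext x
        have : |x - dt| ^ 2 = (x - dt) ^ 2 := sq_abs _
        nlinarith [sq_abs (x - dt)]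
      have hC : Integrable (fun x => (-(2 * m)) * |x - dt| + m ^ 2) P :=
        (hga.const_mul _).add (integrable_const _)
      have hD : Integrable (fun x => (-(2 * m)) * |x - dt|) P := hga.const_mul _
      rw [h, integral_add hg2 hC, integral_add hD (integrable_const _),
        integral_const_mul, integral_const]
      simp [← hm]; ring
    nlinarith [hnn, hexp, I2]
  have hms : m ≤ Real.sqrt ((dt - μ) ^ 2 + σ ^ 2) := by
    calc m = Real.sqrt (m ^ 2) := by rw [Real.sqrt_sq hm0]
    _ ≤ _ := Real.sqrt_le_sqrt hcs
  have hmax : (fun x => max (x - dt) 0) = fun x => ((x - dt) + |x - dt|) / 2 := by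
    funext x
    rcases le_total (x - dt) 0 with h | h
    · rw [max_eq_right h, abs_of_nonpos h]; ring
    · rw [max_eq_left h, abs_of_nonneg h]; ring
  rw [hmax]
  have : (∫ x, ((x - dt) + |x - dt|) / 2 ∂P) = ((μ - dt) + m) / 2 := by
    have h : (fun x => ((x - dt) + |x - dt|) / 2) =
        fun x => (1 / 2) * ((x - dt) + |x - dt|) := by funext x; ring
    rw [h, integral_const_mul, integral_add hg hga,
      integral_sub hint (integrable_const dt), hmean, integral_const, ← hm]
    simp; ring
  rw [this]
  linarith
end

section
/- The function N(d̃) defined piecewise as (1/2)(μ - d̃ + √((d̃-μ)² + σ²)) for d̃ > (μ²+σ²)/(2μ) and μ - d̃·μ²/(μ²+σ²) for d̃ ≤ (μ²+σ²)/(2μ) is convex on ℝ. -/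
open Real

theorem stmt_6 (μ σ : ℝ) (hμ : 0 < μ) (hσ : 0 < σ)
    (N : ℝ → ℝ)
    (hN : ∀ d : ℝ, N d =
      if d ≤ (μ ^ 2 + σ ^ 2) / (2 * μ) then μ - d * μ ^ 2 / (μ ^ 2 + σ ^ 2)
      else (1 / 2) * (μ - d + Real.sqrt ((d - μ) ^ 2 + σ ^ 2))) :
    ConvexOn ℝ Set.univ N := by
  set t := (μ ^ 2 + σ ^ 2) / (2 * μ) with ht
  have hμσ : 0 < μ ^ 2 + σ ^ 2 := by positivity
  have htpos : 0 < t := by positivity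
  have ht2 : 2 * μ * t = μ ^ 2 + σ ^ 2 := by
    rw [ht]; field_simp
  -- sqrt at the junction
  have hsq : Real.sqrt ((t - μ) ^ 2 + σ ^ 2) = t := by
    rw [show (t - μ) ^ 2 + σ ^ 2 = t ^ 2 by nlinarith]
    exact Real.sqrt_sq htpos.le
  -- pieces
  set g : ℝ → ℝ := fun d => μ - d * μ ^ 2 / (μ ^ 2 + σ ^ 2) with hg
  set f : ℝ → ℝ := fun d => (1 / 2) * (μ - d + Real.sqrt ((d - μ) ^ 2 + σ ^ 2)) with hf
  have hfg : f t = g t := by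
    show (1 / 2) * (μ - t + Real.sqrt ((t - μ) ^ 2 + σ ^ 2)) = μ - t * μ ^ 2 / (μ ^ 2 + σ ^ 2)
    rw [hsq]
    have h1 : t * μ ^ 2 / (μ ^ 2 + σ ^ 2) = μ / 2 := by
      rw [ht]; field_simp
    rw [h1]; ring
  -- derivative of f
  set c : ℝ := -(μ ^ 2) / (μ ^ 2 + σ ^ 2) with hc
  set F : ℝ → ℝ := fun d => (1 / 2) * (-1 + (d - μ) / Real.sqrt ((d - μ) ^ 2 + σ ^ 2)) with hF
  have hpos : ∀ d : ℝ, 0 < (d - μ) ^ 2 + σ ^ 2 := fun d => by positivity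
  have hsqrtpos : ∀ d : ℝ, 0 < Real.sqrt ((d - μ) ^ 2 + σ ^ 2) := fun d =>
    Real.sqrt_pos.2 (hpos d)
  have hfderiv : ∀ d : ℝ, HasDerivAt f (F d) d := by
    intro d
    have h1 : HasDerivAt (fun x : ℝ => (x - μ) ^ 2 + σ ^ 2) (2 * (d - μ)) d := by
      have := ((hasDerivAt_id d).sub_const μ).pow 2
      simpa using this.add_const (σ ^ 2)
    have h2 : HasDerivAt (fun x : ℝ => Real.sqrt ((x - μ) ^ 2 + σ ^ 2))
        (1 / (2 * Real.sqrt ((d - μ) ^ 2 + σ ^ 2)) * (2 * (d - μ))) d :=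
      (Real.hasDerivAt_sqrt (hpos d).ne').comp d h1
    have h3 : HasDerivAt (fun x : ℝ => μ - x + Real.sqrt ((x - μ) ^ 2 + σ ^ 2))
        (-1 + 1 / (2 * Real.sqrt ((d - μ) ^ 2 + σ ^ 2)) * (2 * (d - μ))) d :=
      ((hasDerivAt_id d).neg.const_add μ).add h2
    have h4 := h3.const_mul (1 / 2 : ℝ)
    have heq : (1 / 2 : ℝ) * (-1 + 1 / (2 * Real.sqrt ((d - μ) ^ 2 + σ ^ 2)) * (2 * (d - μ)))
        = F d := by
      show _ = (1 / 2) * (-1 + (d - μ) / Real.sqrt ((d - μ) ^ 2 + σ ^ 2))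
      have hs := (hsqrtpos d).ne'
      field_simp
    rw [heq] at h4
    exact h4
  -- F t = c
  have hFt : F t = c := by
    show (1 / 2) * (-1 + (t - μ) / Real.sqrt ((t - μ) ^ 2 + σ ^ 2)) = c
    rw [hsq, hc]
    field_simp
    nlinarith [ht2]
  -- monotonicity of F
  have hFmono : Monotone F := by
    intro a b hab
    show (1 / 2) * (-1 + (a - μ) / Real.sqrt ((a - μ) ^ 2 + σ ^ 2)) ≤
      (1 / 2) * (-1 + (b - μ) / Real.sqrt ((b - μ) ^ 2 + σ ^ 2))
    have ha := hsqrtpos a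
    have hb := hsqrtpos b
    have ha2 : (Real.sqrt ((a - μ) ^ 2 + σ ^ 2)) ^ 2 = (a - μ) ^ 2 + σ ^ 2 :=
      Real.sq_sqrt (hpos a).le
    have hb2 : (Real.sqrt ((b - μ) ^ 2 + σ ^ 2)) ^ 2 = (b - μ) ^ 2 + σ ^ 2 :=
      Real.sq_sqrt (hpos b).le
    have key : (a - μ) / Real.sqrt ((a - μ) ^ 2 + σ ^ 2) ≤
        (b - μ) / Real.sqrt ((b - μ) ^ 2 + σ ^ 2) := by
      rw [div_le_div_iff₀ ha hb]
      set sa := Real.sqrt ((a - μ) ^ 2 + σ ^ 2)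
      set sb := Real.sqrt ((b - μ) ^ 2 + σ ^ 2)
      rcases le_or_gt (a - μ) 0 with h1 | h1
      · rcases le_or_gt 0 (b - μ) with h2 | h2
        · have h3 : (a - μ) * sb ≤ 0 := mul_nonpos_of_nonpos_of_nonneg h1 hb.le
          have h4 : 0 ≤ (b - μ) * sa := mul_nonneg h2 ha.le
          linarith
        · -- both nonpositive: compare (μ-a)*sb ≥ (μ-b)*sa via squares
          have hX : 0 ≤ (μ - a) * sb := mul_nonneg (by linarith) hb.le
          have hY : 0 ≤ (μ - b) * sa := mul_nonneg (by linarith) ha.le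
          have hsq2 : ((μ - b) * sa) ^ 2 ≤ ((μ - a) * sb) ^ 2 := by
            have e1 : ((μ - b) * sa) ^ 2 = (μ - b) ^ 2 * ((a - μ) ^ 2 + σ ^ 2) := by
              rw [mul_pow, ha2]
            have e2 : ((μ - a) * sb) ^ 2 = (μ - a) ^ 2 * ((b - μ) ^ 2 + σ ^ 2) := by
              rw [mul_pow, hb2]
            rw [e1, e2]
            nlinarith [mul_nonneg (mul_nonneg (sq_nonneg σ) (sub_nonneg.2 hab))
              (by linarith : (0:ℝ) ≤ 2 * μ - a - b)]
          have h7 := Real.sqrt_le_sqrt hsq2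
          rw [Real.sqrt_sq hY, Real.sqrt_sq hX] at h7
          have e3 : (a - μ) * sb = -((μ - a) * sb) := by ring
          have e4 : (b - μ) * sa = -((μ - b) * sa) := by ring
          rw [e3, e4]
          linarith
      · have h2 : 0 < b - μ := lt_of_lt_of_le h1 (by linarith)
        have hX : 0 ≤ (a - μ) * sb := mul_nonneg h1.le hb.le
        have hY : 0 ≤ (b - μ) * sa := mul_nonneg h2.le ha.le
        have hsq2 : ((a - μ) * sb) ^ 2 ≤ ((b - μ) * sa) ^ 2 := by
          have e1 : ((a - μ) * sb) ^ 2 = (a - μ) ^ 2 * ((b - μ) ^ 2 + σ ^ 2) := by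
            rw [mul_pow, hb2]
          have e2 : ((b - μ) * sa) ^ 2 = (b - μ) ^ 2 * ((a - μ) ^ 2 + σ ^ 2) := by
            rw [mul_pow, ha2]
          have hsle : (a - μ) ^ 2 ≤ (b - μ) ^ 2 := by
            have := pow_le_pow_left₀ h1.le (by linarith : a - μ ≤ b - μ) 2
            exact this
          have h8 : (a - μ) ^ 2 * ((b - μ) ^ 2 + σ ^ 2)
              = (a - μ) ^ 2 * (b - μ) ^ 2 + σ ^ 2 * (a - μ) ^ 2 := by ring
          have h9 : (b - μ) ^ 2 * ((a - μ) ^ 2 + σ ^ 2)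
              = (a - μ) ^ 2 * (b - μ) ^ 2 + σ ^ 2 * (b - μ) ^ 2 := by ring
          have h10 := mul_le_mul_of_nonneg_left hsle (sq_nonneg σ)
          rw [e1, e2, h8, h9]
          linarith
        have h7 := Real.sqrt_le_sqrt hsq2
        rw [Real.sqrt_sq hX, Real.sqrt_sq hY] at h7
        exact h7
    linarith
  -- N agrees with g on Iic t and with f on Ici t
  have hNg : Set.EqOn N g (Set.Iic t) := by
    intro d hd
    have hd' : d ≤ t := hd
    rw [hN d, if_pos hd']
  have hNf : Set.EqOn N f (Set.Ici t) := by
    intro d hd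
    have hd' : t ≤ d := hd
    rcases eq_or_lt_of_le hd' with h | h
    · rw [hN d, ← h, if_pos le_rfl]
      exact hfg.symm
    · rw [hN d, if_neg (not_le.2 h)]
  -- derivative of g
  have hgd : ∀ d : ℝ, HasDerivAt g c d := by
    intro d
    have : HasDerivAt (fun x : ℝ => μ - x * μ ^ 2 / (μ ^ 2 + σ ^ 2))
        (-(μ ^ 2 / (μ ^ 2 + σ ^ 2))) d := by
      simpa using (((hasDerivAt_id d).mul_const (μ ^ 2)).div_const (μ ^ 2 + σ ^ 2)).const_sub μ
    rw [hc, neg_div]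
    exact this
  -- derivative of N
  set D : ℝ → ℝ := fun d => if d ≤ t then c else F d with hD
  have hNderiv : ∀ d : ℝ, HasDerivAt N (D d) d := by
    intro d
    rcases lt_trichotomy d t with h | h | h
    · have hDd : D d = c := if_pos h.le
      rw [hDd]
      have hev : N =ᶠ[nhds d] g := by
        filter_upwards [Iio_mem_nhds h] with x hx
        exact hNg (Set.mem_Iic.2 (le_of_lt hx))
      exact (hgd d).congr_of_eventuallyEq hev
    · have hDd : D d = c := if_pos h.le
      rw [hDd, h]
      have hleft : HasDerivWithinAt N c (Set.Iic t) t :=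
        ((hgd t).hasDerivWithinAt).congr hNg (hNg (le_refl t))
      have hright : HasDerivWithinAt N c (Set.Ici t) t := by
        have h5 := (hfderiv t).hasDerivWithinAt (s := Set.Ici t)
        rw [hFt] at h5
        exact h5.congr hNf (hNf (le_refl t))
      have h6 := hleft.union hright
      rw [Set.Iic_union_Ici] at h6
      exact hasDerivWithinAt_univ.mp h6
    · have hDd : D d = F d := if_neg (not_le.2 h)
      rw [hDd]
      have hev : N =ᶠ[nhds d] f := by
        filter_upwards [Ioi_mem_nhds h] with x hx
        exact hNf (Set.mem_Ici.2 (le_of_lt hx))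
      exact (hfderiv d).congr_of_eventuallyEq hev
  have hdiff : Differentiable ℝ N := fun d => (hNderiv d).differentiableAt
  have hderiveq : deriv N = D := funext fun d => (hNderiv d).deriv
  have hDmono : Monotone D := by
    intro a b hab
    show (if a ≤ t then c else F a) ≤ (if b ≤ t then c else F b)
    by_cases ha : a ≤ t
    · by_cases hb : b ≤ t
      · simp [ha, hb]
      · rw [if_pos ha, if_neg hb, ← hFt]
        exact hFmono (not_le.1 hb).le
    · have hb : ¬ b ≤ t := fun h => ha (hab.trans h)
      rw [if_neg ha, if_neg hb]
      exact hFmono hab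
  exact Monotone.convexOn_univ_of_deriv hdiff (hderiveq ▸ hDmono)
end

section
/- For fixed μ > 0, σ > 0, the function N(d̃) satisfies N(0) = μ and 0 < N(d̃) < μ for all d̃ > 0, where N is defined piecewise as (1/2)(μ - d̃ + √((d̃-μ)²+σ²)) for d̃ > (μ²+σ²)/(2μ) and μ - d̃μ²/(μ²+σ²) otherwise. -/
open Real

theorem stmt_17 (μ σ : ℝ) (hμ : 0 < μ) (hσ : 0 < σ)
    (N : ℝ → ℝ)
    (hN : ∀ d : ℝ, N d =
      if d ≤ (μ ^ 2 + σ ^ 2) / (2 * μ) then μ - d * μ ^ 2 / (μ ^ 2 + σ ^ 2)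
      else (1 / 2) * (μ - d + Real.sqrt ((d - μ) ^ 2 + σ ^ 2))) :
    N 0 = μ ∧ ∀ d : ℝ, 0 < d → 0 < N d ∧ N d < μ := by
  constructor
  · rw [hN 0]
    have h0 : (0:ℝ) ≤ (μ ^ 2 + σ ^ 2) / (2 * μ) := by positivity
    simp [h0]
  · intro d hd
    rw [hN d]
    split_ifs with h
    · have h2 : d * (2 * μ) ≤ μ ^ 2 + σ ^ 2 := (le_div_iff₀ (by positivity)).mp h
      have hpos : (0:ℝ) < μ ^ 2 + σ ^ 2 := by positivity
      constructor
      · rw [sub_pos, div_lt_iff₀ hpos]; nlinarith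
      · have : 0 < d * μ ^ 2 / (μ ^ 2 + σ ^ 2) := by positivity
        linarith
    · push_neg at h
      have h2 : μ ^ 2 + σ ^ 2 < d * (2 * μ) := (div_lt_iff₀ (by positivity)).mp h
      have hs : Real.sqrt ((d - μ) ^ 2 + σ ^ 2) < μ + d := by
        rw [show (μ + d) = Real.sqrt ((μ + d) ^ 2) from
          (Real.sqrt_sq (by nlinarith)).symm]
        apply Real.sqrt_lt_sqrt (by positivity)
        nlinarith
      have hs2 : d - μ < Real.sqrt ((d - μ) ^ 2 + σ ^ 2) := by
        nlinarith [Real.sq_sqrt (show (0:ℝ) ≤ (d - μ) ^ 2 + σ ^ 2 by positivity),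
          Real.sqrt_nonneg ((d - μ) ^ 2 + σ ^ 2)]
      constructor <;> nlinarith
end
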